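/- For every integer n > 0, e_3B(n) = (1/6) ( n^3 * B(n) - Σ_{k=1}^{n} ( 3n * σ_{2,bin}(k) - 2 * σ_{3,bin}(k) ) * B(n-k) ). -/

import Mathlib

open Finset
open scoped Classical

/-- The finset of binary partitions of `n` (all parts are powers of `2`). -/
noncomputable def binaryPartitions (n : ℕ) : Finset (Nat.Partition n) :=
  Finset.univ.filter fun π => ∀ i ∈ π.parts, ∃ k : ℕ, i = 2 ^ k

/-- `B(n)`, the number of binary partitions of `n`. -/
noncomputable def Bbin (n : ℕ) : ℕ := (binaryPartitions n).card

/-- `e_j B(n)`, the sum of the `j`-th elementary symmetric polynomial evaluated at the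
parts over all binary partitions of `n`. -/
noncomputable def ejB (j n : ℕ) : ℕ := ∑ π ∈ binaryPartitions n, π.parts.esymm j

/-- `σ_{j,bin}(n) = Σ_{d ≥ 0, 2^d ∣ n} 2^{d·j}`. -/
def sigmaBin (j n : ℕ) : ℕ :=
  ∑ d ∈ (Finset.range (n + 1)).filter (fun d => 2 ^ d ∣ n), 2 ^ (d * j)

/-! Newton's identity `6 e₃ = p₁³ - 3 p₁ p₂ + 2 p₃` for the power sums `p_j` of the parts, with
`p₁ = n`, reduces the claim to `∑_{λ binary ⊢ n} p_j(λ) = ∑_{k=1}^n σ_{j,bin}(k) B(n-k)`. This holds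
for partitions with parts in any set `S`: deleting `i` copies of a part `m ∈ S` is a bijection from
the `S`-partitions of `n` with at least `i` parts equal to `m` onto the `S`-partitions of `n - i m`,
so the multiplicity of `m`, summed over all `S`-partitions of `n`, is `∑_{i ≥ 1} #P_S(n - i m)`.
Grouping the terms `m ^ j #P_S(n - i m)` by `k = i m` gives
`∑_k (∑_{m ∣ k, m ∈ S} m ^ j) #P_S(n - k)`. -/

namespace Multiset

lemma esymm_cons_succ {R : Type*} [CommSemiring R] (a : R) (s : Multiset R) (k : ℕ) :
    (a ::ₘ s).esymm (k + 1) = s.esymm (k + 1) + a * s.esymm k := by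
  simp only [esymm, powersetCard_cons, map_add, sum_add, map_map, Function.comp_def, prod_cons,
    ← sum_map_mul_left]

lemma esymm_map_ringHom {R S : Type*} [CommSemiring R] [CommSemiring S] (f : R →+* S)
    (s : Multiset R) (k : ℕ) : (s.map f).esymm k = f (s.esymm k) := by
  simp [esymm, powersetCard_map, map_map, map_multiset_sum, map_multiset_prod]

variable {R : Type*} [CommRing R]

lemma two_mul_esymm_two (s : Multiset R) :
    2 * s.esymm 2 = s.sum ^ 2 - (s.map (· ^ 2)).sum := by
  induction s using Multiset.induction with
  | empty => simp [esymm, powersetCard_zero_right]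
  | cons a s ih =>
    rw [esymm_cons_succ, show s.esymm 1 = s.sum by simp [esymm, powersetCard_one]]
    simp only [map_cons, sum_cons]
    linear_combination ih

lemma six_mul_esymm_three (s : Multiset R) :
    6 * s.esymm 3 = s.sum ^ 3 - 3 * s.sum * (s.map (· ^ 2)).sum + 2 * (s.map (· ^ 3)).sum := by
  induction s using Multiset.induction with
  | empty => simp [esymm, powersetCard_zero_right]
  | cons a s ih =>
    rw [esymm_cons_succ]
    simp only [map_cons, sum_cons]
    linear_combination ih + 3 * a * two_mul_esymm_two s

end Multiset

lemma Finset.sum_Icc_mul_eq_sum_filter_dvd {M : Type*} [AddCommMonoid M] (f : ℕ → M) {n m : ℕ}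
    (hm : 0 < m) : ∑ i ∈ Icc 1 (n / m), f (i * m) = ∑ k ∈ Icc 1 n with m ∣ k, f k := by
  rw [← sum_image fun a _ b _ h => Nat.eq_of_mul_eq_mul_right hm h]
  congr 1
  ext k
  simp only [mem_image, mem_Icc, mem_filter, Nat.le_div_iff_mul_le hm]
  constructor
  · rintro ⟨i, ⟨hi, hin⟩, rfl⟩
    exact ⟨⟨Nat.mul_pos hi hm, hin⟩, dvd_mul_left m i⟩
  · rintro ⟨⟨hk, hkn⟩, i, rfl⟩
    exact ⟨i, ⟨Nat.pos_of_mul_pos_left hk, by rwa [mul_comm]⟩, mul_comm i m⟩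

namespace Nat.Partition

lemma count_mul_le {n : ℕ} (π : n.Partition) (m : ℕ) : π.parts.count m * m ≤ n := by
  obtain ⟨u, hu⟩ := Multiset.le_iff_exists_add.1
    (Multiset.le_count_iff_replicate_le.1 (le_refl (π.parts.count m)))
  have := congrArg Multiset.sum hu
  rw [π.parts_sum, Multiset.sum_add, Multiset.sum_replicate, smul_eq_mul] at this
  omega

lemma six_mul_esymm_three_parts {R : Type*} [CommRing R] {n : ℕ} (π : n.Partition) :
    6 * ((π.parts.esymm 3 : ℕ) : R) = (n : R) ^ 3 - 3 * n * ((π.parts.map (· ^ 2)).sum : ℕ)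
      + 2 * ((π.parts.map (· ^ 3)).sum : ℕ) := by
  have h := (π.parts.map (Nat.castRingHom R)).six_mul_esymm_three
  rw [Multiset.esymm_map_ringHom, ← map_multiset_sum, π.parts_sum] at h
  simpa only [Nat.cast_multiset_sum, Multiset.map_map, Function.comp_def, Nat.cast_pow,
    Nat.coe_castRingHom] using h

section Restricted

variable {p : ℕ → Prop} [DecidablePred p]

lemma mem_restricted {n : ℕ} {π : n.Partition} : π ∈ restricted n p ↔ ∀ i ∈ π.parts, p i := by
  simp [restricted]

lemma card_restricted_filter_le_count {n m k : ℕ} (hm : 0 < m) (hpm : p m) (hkm : k * m ≤ n) :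
    #{π ∈ restricted n p | k ≤ π.parts.count m} = #(restricted (n - k * m) p) := by
  symm
  refine card_bij (fun π _ => ⟨π.parts + .replicate k m,
      fun hi => (Multiset.mem_add.1 hi).elim π.parts_pos
        fun hi => Multiset.eq_of_mem_replicate hi ▸ hm,
      by rw [Multiset.sum_add, π.parts_sum, Multiset.sum_replicate, smul_eq_mul]; omega⟩) ?_ ?_ ?_
  · intro π hπ
    simp only [mem_filter, mem_restricted, Multiset.mem_add, Multiset.count_add,
      Multiset.count_replicate_self] at hπ ⊢
    exact ⟨fun i hi => hi.elim (hπ i) fun hi => Multiset.eq_of_mem_replicate hi ▸ hpm, by omega⟩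
  · intro π₁ _ π₂ _ h
    exact Nat.Partition.ext (add_right_cancel (congrArg Nat.Partition.parts h))
  · intro π hπ
    rw [mem_filter, mem_restricted] at hπ
    have hrep : Multiset.replicate k m ≤ π.parts := Multiset.le_count_iff_replicate_le.1 hπ.2
    refine ⟨⟨π.parts - .replicate k m,
        fun hi => π.parts_pos (Multiset.mem_of_le tsub_le_self hi), ?_⟩,
      mem_restricted.2 fun i hi => hπ.1 i (Multiset.mem_of_le tsub_le_self hi),
      Nat.Partition.ext (tsub_add_cancel_of_le hrep)⟩
    have := congrArg Multiset.sum (tsub_add_cancel_of_le hrep)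
    rw [Multiset.sum_add, π.parts_sum, Multiset.sum_replicate, smul_eq_mul] at this
    omega

lemma sum_count_restricted {n m : ℕ} (hm : 0 < m) (hpm : p m) :
    ∑ π ∈ restricted n p, π.parts.count m = ∑ i ∈ Icc 1 (n / m), #(restricted (n - i * m) p) := by
  have hcount (π : n.Partition) :
      π.parts.count m = ∑ i ∈ Icc 1 (n / m), if i ≤ π.parts.count m then 1 else 0 := by
    have hle : π.parts.count m ≤ n / m := (Nat.le_div_iff_mul_le hm).2 (π.count_mul_le m)
    have hfilter : {i ∈ Icc 1 (n / m) | i ≤ π.parts.count m} = Icc 1 (π.parts.count m) := by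
      ext i
      simp only [mem_filter, mem_Icc]
      omega
    simp [hfilter]
  rw [sum_congr rfl fun π _ => hcount π, sum_comm]
  refine sum_congr rfl fun i hi => ?_
  rw [← card_filter, card_restricted_filter_le_count hm hpm]
  exact (Nat.le_div_iff_mul_le hm).1 (mem_Icc.1 hi).2

lemma sum_map_pow_parts_eq_sum_count_mul {n j : ℕ} {π : n.Partition} (hπ : π ∈ restricted n p) :
    (π.parts.map (· ^ j)).sum = ∑ m ∈ Icc 1 n with p m, π.parts.count m * m ^ j := by
  rw [Finset.sum_multiset_map_count]
  refine sum_subset (fun m hm => ?_) (fun m _ hm => ?_)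
  · rw [Multiset.mem_toFinset] at hm
    exact mem_filter.2 ⟨mem_Icc.2 ⟨π.parts_pos hm, le_of_mem_parts hm⟩, mem_restricted.1 hπ m hm⟩
  · rw [Multiset.mem_toFinset] at hm
    simp [Multiset.count_eq_zero_of_notMem hm]

theorem sum_sum_map_pow_restricted (n j : ℕ) :
    ∑ π ∈ restricted n p, (π.parts.map (· ^ j)).sum =
      ∑ k ∈ Icc 1 n, (∑ m ∈ k.divisors with p m, m ^ j) * #(restricted (n - k) p) := by
  calc _ = ∑ m ∈ Icc 1 n with p m, m ^ j * ∑ π ∈ restricted n p, π.parts.count m := by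
        rw [sum_congr rfl fun π hπ => sum_map_pow_parts_eq_sum_count_mul hπ, sum_comm]
        simp_rw [mul_sum, mul_comm]
    _ = ∑ m ∈ Icc 1 n with p m, ∑ k ∈ Icc 1 n with m ∣ k, m ^ j * #(restricted (n - k) p) := by
        refine sum_congr rfl fun m hm => ?_
        rw [mem_filter, mem_Icc] at hm
        rw [sum_count_restricted hm.1.1 hm.2, mul_sum,
          sum_Icc_mul_eq_sum_filter_dvd (fun k => m ^ j * #(restricted (n - k) p)) hm.1.1]
    _ = ∑ k ∈ Icc 1 n, ∑ m ∈ k.divisors with p m, m ^ j * #(restricted (n - k) p) := by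
        refine sum_comm' fun m k => ?_
        simp only [mem_filter, mem_Icc, Nat.mem_divisors]
        constructor
        · rintro ⟨⟨⟨hm, -⟩, hpm⟩, hk, hmk⟩
          exact ⟨⟨⟨hmk, by omega⟩, hpm⟩, hk⟩
        · rintro ⟨⟨⟨hmk, -⟩, hpm⟩, hk, hkn⟩
          have := Nat.le_of_dvd hk hmk
          exact ⟨⟨⟨Nat.pos_of_dvd_of_pos hmk hk, by omega⟩, hpm⟩, ⟨hk, hkn⟩, hmk⟩
    _ = _ := by simp_rw [sum_mul]

end Restricted

end Nat.Partition

lemma binaryPartitions_eq_restricted (n : ℕ) :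
    binaryPartitions n = Nat.Partition.restricted n (∃ d, · = 2 ^ d) := by
  ext π
  simp only [binaryPartitions, Nat.Partition.mem_restricted, mem_filter, mem_univ, true_and]

lemma sigmaBin_eq_sum_divisors (j : ℕ) {k : ℕ} (hk : 0 < k) :
    sigmaBin j k = ∑ m ∈ k.divisors with ∃ d, m = 2 ^ d, m ^ j := by
  simp_rw [sigmaBin, pow_mul]
  rw [← sum_image (f := (· ^ j)) fun a _ b _ h => Nat.pow_right_injective le_rfl h]
  congr 1
  ext m
  simp only [mem_image, mem_filter, mem_range, Nat.mem_divisors]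
  constructor
  · rintro ⟨d, ⟨-, hd⟩, rfl⟩
    exact ⟨⟨hd, hk.ne'⟩, d, rfl⟩
  · rintro ⟨⟨hd, -⟩, d, rfl⟩
    have := Nat.le_of_dvd hk hd
    exact ⟨d, ⟨by have := d.lt_two_pow_self; omega, hd⟩, rfl⟩

theorem sum_sum_map_pow_binaryPartitions (n j : ℕ) :
    ∑ π ∈ binaryPartitions n, (π.parts.map (· ^ j)).sum =
      ∑ k ∈ Icc 1 n, sigmaBin j k * Bbin (n - k) := by
  rw [binaryPartitions_eq_restricted, Nat.Partition.sum_sum_map_pow_restricted]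
  refine sum_congr rfl fun k hk => ?_
  rw [sigmaBin_eq_sum_divisors j (mem_Icc.1 hk).1, Bbin, binaryPartitions_eq_restricted]

theorem e3B_formula_general (n : ℕ) :
    (ejB 3 n : ℚ) =
      (1 / 6) * ((n : ℚ) ^ 3 * (Bbin n : ℚ) -
        ∑ k ∈ Finset.Icc 1 n,
          (3 * (n : ℚ) * (sigmaBin 2 k : ℚ) - 2 * (sigmaBin 3 k : ℚ)) * (Bbin (n - k) : ℚ)) := by
  have hpsum (j : ℕ) : ∑ π ∈ binaryPartitions n, (((π.parts.map (· ^ j)).sum : ℕ) : ℚ) =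
      ∑ k ∈ Icc 1 n, (sigmaBin j k : ℚ) * Bbin (n - k) := by
    exact_mod_cast sum_sum_map_pow_binaryPartitions n j
  have h6 : 6 * (ejB 3 n : ℚ) = ∑ π ∈ binaryPartitions n, ((n : ℚ) ^ 3
      - 3 * n * ((π.parts.map (· ^ 2)).sum : ℕ) + 2 * ((π.parts.map (· ^ 3)).sum : ℕ)) := by
    rw [ejB, Nat.cast_sum, mul_sum]
    exact sum_congr rfl fun π _ => π.six_mul_esymm_three_parts
  rw [sum_add_distrib, sum_sub_distrib, ← mul_sum, ← mul_sum, hpsum, hpsum, sum_const,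
    nsmul_eq_mul, ← Bbin] at h6
  simp only [sub_mul, mul_assoc, ← mul_sum, sum_sub_distrib]
  linear_combination h6 / 6

theorem e3B_formula (n : ℕ) (hn : 0 < n) :
    (ejB 3 n : ℚ) =
      (1 / 6) * ((n : ℚ) ^ 3 * (Bbin n : ℚ) -
        ∑ k ∈ Finset.Icc 1 n,
          (3 * (n : ℚ) * (sigmaBin 2 k : ℚ) - 2 * (sigmaBin 3 k : ℚ)) * (Bbin (n - k) : ℚ)) :=
  e3B_formula_general n
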